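/- Let G ∈ F(u_1,…,u_n) be symmetric, i.e. G(u_{σ(1)},…,u_{σ(n)}) = G(u_1,…,u_n) for all σ ∈ S_n. Then (1/n!) · Sym_u( ϖ(u)⁻¹ · G ) = (1/[n]_q!) · Sym_u( G ), where [n]_q = (qⁿ − q⁻ⁿ)/(q − q⁻¹) and [n]_q! = [1]_q·[2]_q⋯[n]_q. -/

import Mathlib

/-! The function ϖ transforms under substitution by the cocycle: ϖ(^σu) = c_σ(u)·ϖ(u). Hence
every term of Sym_u(ϖ⁻¹G) equals ϖ⁻¹G, so the left side is ϖ⁻¹G, while Sym_u(G) is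
(Σ_σ ϖ(^σu))·ϖ⁻¹G. The identity Σ_σ ϖ(^σu) = [n]_q! follows by induction on n after splitting
σ according to σ(1): the inner sums are q-factorials in one variable less, and the outer sum
Σ_p ∏_{m≠p} (q⁻¹u_p − qu_m)/(u_p − u_m) equals [n]_q, as one sees by computing the leading
coefficient of ∏_m (q⁻¹X − qu_m) by Lagrange interpolation at the nodes 0, u_1, …, u_n. -/

open scoped BigOperators
open MvPolynomial

noncomputable section

/-- The base field `F = ℂ(q)`. -/
abbrev F0 : Type := RatFunc ℂ

/-- The field of rational functions `F(u₁,…,uₙ)`. -/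
abbrev Kn (n : ℕ) : Type := FractionRing (MvPolynomial (Fin n) F0)

/-- The element `q` of `F(u₁,…,uₙ)`. -/
def qK (n : ℕ) : Kn n := algebraMap (MvPolynomial (Fin n) F0) (Kn n) (C RatFunc.X)

/-- The variable `uᵢ` as an element of `F(u₁,…,uₙ)`. -/
def uvar (n : ℕ) (i : Fin n) : Kn n := algebraMap (MvPolynomial (Fin n) F0) (Kn n) (X i)

/-- The substitution automorphism `G(u) ↦ G(^σu)`, i.e. `u_i ↦ u_{σ(i)}`. -/
def act {n : ℕ} (σ : Equiv.Perm (Fin n)) : Kn n ≃+* Kn n :=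
  IsFractionRing.ringEquivOfRingEquiv (MvPolynomial.renameEquiv F0 σ).toRingEquiv

/-- The cocycle `c_σ(u)`, a product over the inversions of `σ`. -/
def coc {n : ℕ} (σ : Equiv.Perm (Fin n)) : Kn n :=
  ∏ p ∈ Finset.univ.filter (fun p : Fin n × Fin n => p.1 < p.2 ∧ σ p.2 < σ p.1),
    (qK n * uvar n (σ p.2) - (qK n)⁻¹ * uvar n (σ p.1)) /
      ((qK n)⁻¹ * uvar n (σ p.2) - qK n * uvar n (σ p.1))

/-- The map `π(σ) : G ↦ c_σ(u)·G(^σu)`. -/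
def piAct {n : ℕ} (σ : Equiv.Perm (Fin n)) (G : Kn n) : Kn n := coc σ * act σ G

/-- The q-symmetrization `Sym_u(G) = Σ_{σ∈S_n} c_σ(u)·G(^σu)`. -/
def symQ {n : ℕ} (G : Kn n) : Kn n := ∑ σ : Equiv.Perm (Fin n), piAct σ G

/-- The function `ϖ(u) = ∏_{k<k′} (q⁻¹·u_k − q·u_{k′})/(u_k − u_{k′})`. -/
def varpi (n : ℕ) : Kn n :=
  ∏ p ∈ Finset.univ.filter (fun p : Fin n × Fin n => p.1 < p.2),
    ((qK n)⁻¹ * uvar n p.1 - qK n * uvar n p.2) / (uvar n p.1 - uvar n p.2)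

/-- The q-number `[k]_q = (q^k − q^{−k})/(q − q⁻¹)` as an element of `F(u₁,…,uₙ)`. -/
def qNum (n k : ℕ) : Kn n := ((qK n) ^ k - ((qK n)⁻¹) ^ k) / (qK n - (qK n)⁻¹)

/-- The q-factorial `[k]_q! = [1]_q·[2]_q⋯[k]_q`. -/
def qFact (n k : ℕ) : Kn n := ∏ i ∈ Finset.range k, qNum n (i + 1)

open Finset Equiv

section General

variable {K : Type*} [Field K]

def ltPairs (k : ℕ) : Finset (Fin k × Fin k) := univ.filter fun p => p.1 < p.2

theorem mem_ltPairs {k : ℕ} {p : Fin k × Fin k} : p ∈ ltPairs k ↔ p.1 < p.2 := by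
  simp [ltPairs]

-- `varpi n` and `coc σ` are, by definition, these with `a = q⁻¹`, `b = q` and `y = u`.
def varpiGen {k : ℕ} (a b : K) (y : Fin k → K) : K :=
  ∏ p ∈ ltPairs k, (a * y p.1 - b * y p.2) / (y p.1 - y p.2)

def cocGen {k : ℕ} (a b : K) (y : Fin k → K) (σ : Perm (Fin k)) : K :=
  ∏ p ∈ univ.filter (fun p : Fin k × Fin k => p.1 < p.2 ∧ σ p.2 < σ p.1),
    (b * y (σ p.2) - a * y (σ p.1)) / (a * y (σ p.2) - b * y (σ p.1))

def sortPair {k : ℕ} (σ : Perm (Fin k)) (p : Fin k × Fin k) : Fin k × Fin k :=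
  (min (σ p.1) (σ p.2), max (σ p.1) (σ p.2))

theorem sortPair_mem_ltPairs {k : ℕ} (σ : Perm (Fin k)) {p : Fin k × Fin k}
    (hp : p ∈ ltPairs k) : sortPair σ p ∈ ltPairs k := by
  simpa [sortPair, mem_ltPairs] using (σ.injective.ne (mem_ltPairs.mp hp).ne).symm

theorem sortPair_inv_sortPair {k : ℕ} (σ : Perm (Fin k)) {p : Fin k × Fin k}
    (hp : p ∈ ltPairs k) : sortPair σ⁻¹ (sortPair σ p) = p := by
  rw [mem_ltPairs] at hp
  rcases lt_or_gt_of_ne (σ.injective.ne hp.ne) with h | h <;>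
    simp [sortPair, h.le, hp.le]

theorem prod_sortPair {M : Type*} [CommMonoid M] {k : ℕ} (σ : Perm (Fin k))
    (f : Fin k × Fin k → M) : ∏ p ∈ ltPairs k, f (sortPair σ p) = ∏ p ∈ ltPairs k, f p :=
  prod_nbij' (sortPair σ) (sortPair σ⁻¹) (fun _ => sortPair_mem_ltPairs σ)
    (fun _ => sortPair_mem_ltPairs σ⁻¹) (fun _ => sortPair_inv_sortPair σ)
    (fun _ hp => inv_inv σ ▸ sortPair_inv_sortPair σ⁻¹ hp) (fun _ _ => rfl)

theorem div_sub_eq_div_mul_div_sub (a b : K) {x y : K} (h : a * y - b * x ≠ 0) :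
    (a * x - b * y) / (x - y) =
      (b * y - a * x) / (a * y - b * x) * ((a * y - b * x) / (y - x)) := by
  rw [div_mul_div_cancel₀ h, ← neg_sub (a * x), ← neg_sub x, neg_div_neg_eq]

theorem varpiGen_comp_perm {a b : K} {k : ℕ} {y : Fin k → K}
    (hy : ∀ i j, i ≠ j → a * y i - b * y j ≠ 0) (σ : Perm (Fin k)) :
    varpiGen a b (y ∘ σ) = cocGen a b y σ * varpiGen a b y := by
  let r : Fin k × Fin k → K := fun q => (a * y q.1 - b * y q.2) / (y q.1 - y q.2)
  have hterm : ∀ p ∈ ltPairs k, r (σ p.1, σ p.2) =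
      (if σ p.2 < σ p.1 then (b * y (σ p.2) - a * y (σ p.1)) / (a * y (σ p.2) - b * y (σ p.1))
        else 1) * r (sortPair σ p) := fun p _ => by
    simp only [r, sortPair]
    split_ifs with h
    · rw [min_eq_right h.le, max_eq_left h.le]
      exact div_sub_eq_div_mul_div_sub a b (hy _ _ h.ne)
    · push Not at h
      rw [min_eq_left h, max_eq_right h, one_mul]
  calc varpiGen a b (y ∘ σ) = ∏ p ∈ ltPairs k, r (σ p.1, σ p.2) := rfl
    _ = cocGen a b y σ * ∏ p ∈ ltPairs k, r (sortPair σ p) := by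
      rw [prod_congr rfl hterm, prod_mul_distrib, cocGen, ← filter_filter, ltPairs,
        prod_filter (fun p : Fin k × Fin k => σ p.2 < σ p.1)]
    _ = cocGen a b y σ * varpiGen a b y := by rw [prod_sortPair]; rfl

theorem varpiGen_ne_zero {a b : K} {k : ℕ} {y : Fin k → K} (hy : Function.Injective y)
    (hab : ∀ i j, i ≠ j → a * y i - b * y j ≠ 0) : varpiGen a b y ≠ 0 :=
  prod_ne_zero_iff.mpr fun p hp =>
    have hp : p.1 ≠ p.2 := (mem_ltPairs.mp hp).ne
    div_ne_zero (hab _ _ hp) (sub_ne_zero.mpr (hy.ne hp))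

theorem sum_prod_erase_div_sub [DecidableEq K] (a b : K) {s : Finset K} (hs : 0 ∉ s) :
    (a - b) * ∑ x ∈ s, ∏ z ∈ s.erase x, (a * x - b * z) / (x - z) = a ^ #s - b ^ #s := by
  set P : Polynomial K := ∏ z ∈ s, (Polynomial.C a * Polynomial.X - Polynomial.C (b * z))
  have hdeg : ∀ z ∈ s, (Polynomial.C a * Polynomial.X - Polynomial.C (b * z)).natDegree ≤ 1 :=
    fun z _ => by compute_degree
  have hP : P.natDegree ≤ #s :=
    (Polynomial.natDegree_prod_le _ _).trans ((sum_le_card_nsmul _ _ 1 hdeg).trans (by simp))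
  have hcoeff : P.coeff #s = a ^ #s := by
    simpa [Polynomial.coeff_C_mul, Polynomial.coeff_C, P] using
      Polynomial.coeff_prod_of_natDegree_le s _ 1 hdeg
  have key := Lagrange.coeff_eq_sum (Set.injOn_id (↑(insert 0 s) : Set K)) (P := P) (by
    rw [card_insert_of_notMem hs]
    exact (Polynomial.degree_le_of_natDegree_le hP).trans_lt
      (by exact_mod_cast Nat.lt_succ_self _))
  rw [card_insert_of_notMem hs, Nat.add_sub_cancel, hcoeff, sum_insert hs, erase_insert hs] at key
  have hx0 : ∀ x ∈ s, x ≠ 0 := fun x hx h => hs (h ▸ hx)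
  have hzero : Polynomial.eval 0 P / ∏ z ∈ s, (0 - z) = b ^ #s := by
    rw [Polynomial.eval_prod, ← prod_div_distrib, ← prod_const]
    refine prod_congr rfl fun z hz => ?_
    simp only [Polynomial.eval_sub, Polynomial.eval_mul, Polynomial.eval_C, Polynomial.eval_X,
      mul_zero, zero_sub, neg_div_neg_eq]
    exact mul_div_cancel_right₀ b (hx0 z hz)
  have hnode : ∀ x ∈ s, Polynomial.eval x P / ∏ z ∈ (insert 0 s).erase x, (x - z)
      = (a - b) * ∏ z ∈ s.erase x, (a * x - b * z) / (x - z) := fun x hx => by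
    rw [erase_insert_of_ne (hx0 x hx).symm, prod_insert (fun h => hs (mem_of_mem_erase h)),
      Polynomial.eval_prod, ← mul_prod_erase s _ hx, prod_div_distrib]
    simp only [Polynomial.eval_sub, Polynomial.eval_mul, Polynomial.eval_C, Polynomial.eval_X,
      sub_zero]
    field_simp [hx0 x hx]
  simp only [id] at key
  rw [hzero, sum_congr rfl hnode, ← mul_sum] at key
  linear_combination -key

theorem prod_ltPairs {M : Type*} [CommMonoid M] {k : ℕ} (f : Fin k → Fin k → M) :
    ∏ p ∈ ltPairs k, f p.1 p.2 = ∏ i, ∏ j ∈ Ioi i, f i j := by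
  rw [ltPairs, prod_filter, Fintype.prod_prod_type]
  refine prod_congr rfl fun i _ => ?_
  rw [← prod_filter, filter_lt_eq_Ioi]

theorem varpiGen_succ {k : ℕ} (a b : K) (y : Fin (k + 1) → K) :
    varpiGen a b y = (∏ j : Fin k, (a * y 0 - b * y j.succ) / (y 0 - y j.succ)) *
      varpiGen a b (fun j => y j.succ) := by
  simp only [varpiGen, prod_ltPairs (fun i j => (a * y i - b * y j) / (y i - y j)),
    prod_ltPairs (fun i j => (a * y i.succ - b * y j.succ) / (y i.succ - y j.succ)),
    Fin.prod_univ_succ, Fin.Ioi_zero_eq_map, Fin.Ioi_succ, prod_map, Fin.coe_succEmb]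

theorem image_swap_zero_succ {k : ℕ} (p : Fin (k + 1)) :
    univ.image (fun j : Fin k => swap 0 p j.succ) = univ.erase p := by
  ext m
  simp only [mem_image, mem_univ, true_and, mem_erase, and_true]
  constructor
  · rintro ⟨j, rfl⟩ h
    exact Fin.succ_ne_zero j ((swap 0 p).injective (h.trans (swap_apply_left 0 p).symm))
  · intro hm
    have hm0 : swap 0 p m ≠ 0 := fun h => hm (by rw [← swap_apply_self 0 p m, h, swap_apply_left])
    obtain ⟨j, hj⟩ := Fin.exists_succ_eq.mpr hm0
    exact ⟨j, by rw [hj, swap_apply_self]⟩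

theorem sum_varpiGen_comp_perm {a b : K} (hab : a ≠ b) {k : ℕ} {y : Fin k → K}
    (hy : Function.Injective y) (hy0 : ∀ i, y i ≠ 0) :
    ∑ σ : Perm (Fin k), varpiGen a b (y ∘ σ) =
      ∏ i ∈ range k, (a ^ (i + 1) - b ^ (i + 1)) / (a - b) := by
  classical
  induction k with
  | zero => simp [varpiGen, ltPairs]
  | succ k ih =>
    set w : Fin (k + 1) → Fin k → Fin (k + 1) := fun p j => swap 0 p j.succ
    have hw : ∀ p, Function.Injective (y ∘ w p) := fun p =>
      hy.comp fun i j h => Fin.succ_injective _ ((swap 0 p).injective h)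
    have himage : ∀ p, (univ.image y).erase (y p) = univ.image (y ∘ w p) := fun p => by
      rw [← image_erase hy, ← image_swap_zero_succ, image_image]
    have hterm : ∀ p e, varpiGen a b (y ∘ Perm.decomposeFin.symm (p, e)) =
        (∏ z ∈ (univ.image y).erase (y p), (a * y p - b * z) / (y p - z)) *
          varpiGen a b ((y ∘ w p) ∘ e) := fun p e => by
      rw [varpiGen_succ, himage, prod_image (hw p).injOn]
      simp only [Function.comp_apply, Perm.decomposeFin_symm_apply_zero,
        Perm.decomposeFin_symm_apply_succ]
      rw [Equiv.prod_comp e (fun j => (a * y p - b * y (w p j)) / (y p - y (w p j)))]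
      rfl
    have hsum := sum_prod_erase_div_sub a b (s := univ.image y) (by simpa using hy0)
    rw [card_image_of_injective _ hy, card_fin, sum_image hy.injOn] at hsum
    rw [← Perm.decomposeFin.symm.sum_comp, Fintype.sum_prod_type]
    simp_rw [hterm, ← mul_sum, ih (hw _) (fun _ => hy0 _), ← sum_mul, prod_range_succ]
    rw [mul_comm]
    congr 1
    rw [eq_div_iff (sub_ne_zero.mpr hab), mul_comm, hsum]

end General

theorem C_mul_X_sub_C_mul_X_ne_zero {R σ : Type*} [CommRing R] {α β : R} (hα : α ≠ 0)
    {i j : σ} (hij : i ≠ j) : C α * X i - C β * X j ≠ (0 : MvPolynomial σ R) := by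
  classical
  intro h
  have := congrArg (coeff (Finsupp.single i 1)) h
  simp [coeff_C_mul, coeff_X, Finsupp.single_left_inj one_ne_zero, hij.symm, hα] at this

theorem Transcendental.pow_ne_inv_pow {R L : Type*} [CommRing R] [Nontrivial R] [Field L]
    [Algebra R L] {t : L} (ht : Transcendental R t) {m : ℕ} (hm : 0 < m) : t ^ m ≠ t⁻¹ ^ m := by
  intro h
  have h1 : t ^ (2 * m) = 1 := by
    rw [two_mul, pow_add]
    nth_rw 2 [h]
    rw [← mul_pow, mul_inv_cancel₀ fun h0 : t = 0 => ht (h0 ▸ isAlgebraic_zero), one_pow]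
  exact ht.pow (by omega) (h1 ▸ isAlgebraic_one)

variable {n : ℕ}

theorem qK_eq_algebraMap : qK n = algebraMap F0 (Kn n) RatFunc.X := by
  rw [qK, IsScalarTower.algebraMap_apply F0 (MvPolynomial (Fin n) F0) (Kn n)]
  rfl

theorem transcendental_qK : Transcendental ℂ (qK n) := by
  rw [qK_eq_algebraMap, transcendental_algebraMap_iff (algebraMap F0 (Kn n)).injective]
  exact RatFunc.transcendental_X

theorem uvar_injective : Function.Injective (uvar n) :=
  (IsFractionRing.injective _ _).comp (X_injective (R := F0))

theorem uvar_ne_zero (i : Fin n) : uvar n i ≠ 0 :=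
  (map_ne_zero_iff _ (IsFractionRing.injective _ _)).mpr (X_ne_zero i)

theorem qK_inv_mul_uvar_sub_ne_zero {i j : Fin n} (hij : i ≠ j) :
    (qK n)⁻¹ * uvar n i - qK n * uvar n j ≠ 0 := by
  rw [qK_eq_algebraMap, ← map_inv₀, uvar, uvar,
    IsScalarTower.algebraMap_apply F0 (MvPolynomial (Fin n) F0) (Kn n),
    IsScalarTower.algebraMap_apply F0 (MvPolynomial (Fin n) F0) (Kn n), ← map_mul, ← map_mul,
    ← map_sub]
  exact (map_ne_zero_iff _ (IsFractionRing.injective _ _)).mpr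
    (C_mul_X_sub_C_mul_X_ne_zero (inv_ne_zero RatFunc.X_ne_zero) hij)

theorem qK_ne_inv : qK n ≠ (qK n)⁻¹ := by
  simpa using transcendental_qK.pow_ne_inv_pow one_pos

theorem qNum_ne_zero {k : ℕ} (hk : 0 < k) : qNum n k ≠ 0 :=
  div_ne_zero (sub_ne_zero.mpr (transcendental_qK.pow_ne_inv_pow hk)) (sub_ne_zero.mpr qK_ne_inv)

theorem qFact_ne_zero (k : ℕ) : qFact n k ≠ 0 :=
  prod_ne_zero_iff.mpr fun i _ => qNum_ne_zero i.succ_pos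

theorem act_algebraMap (σ : Perm (Fin n)) (P : MvPolynomial (Fin n) F0) :
    act σ (algebraMap _ (Kn n) P) = algebraMap _ (Kn n) (rename σ P) := by
  simp [act]

theorem act_qK (σ : Perm (Fin n)) : act σ (qK n) = qK n := by
  rw [qK, act_algebraMap, rename_C]

theorem act_uvar (σ : Perm (Fin n)) (i : Fin n) : act σ (uvar n i) = uvar n (σ i) := by
  rw [uvar, act_algebraMap, rename_X, uvar]

theorem act_varpi (σ : Perm (Fin n)) :
    act σ (varpi n) = varpiGen (qK n)⁻¹ (qK n) (uvar n ∘ σ) := by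
  simp only [varpi, varpiGen, ltPairs, map_prod, map_div₀, map_sub, map_mul, map_inv₀, act_qK, act_uvar,
    Function.comp_apply]

theorem act_varpi_eq_coc_mul (σ : Perm (Fin n)) : act σ (varpi n) = coc σ * varpi n :=
  (act_varpi σ).trans (varpiGen_comp_perm (fun _ _ => qK_inv_mul_uvar_sub_ne_zero) σ)

theorem varpi_ne_zero : varpi n ≠ 0 :=
  varpiGen_ne_zero uvar_injective fun _ _ => qK_inv_mul_uvar_sub_ne_zero

theorem coc_ne_zero (σ : Perm (Fin n)) : coc σ ≠ 0 :=
  left_ne_zero_of_mul (act_varpi_eq_coc_mul σ ▸ (map_ne_zero (act σ)).mpr varpi_ne_zero)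

theorem qFact_eq_prod (k : ℕ) :
    qFact n k = ∏ i ∈ range k, ((qK n)⁻¹ ^ (i + 1) - qK n ^ (i + 1)) / ((qK n)⁻¹ - qK n) :=
  prod_congr rfl fun i _ => by rw [qNum, ← neg_div_neg_eq, neg_sub, neg_sub]

theorem sum_act_varpi : ∑ σ : Perm (Fin n), act σ (varpi n) = qFact n n := by
  simp_rw [act_varpi]
  rw [sum_varpiGen_comp_perm qK_ne_inv.symm uvar_injective uvar_ne_zero, qFact_eq_prod]

theorem piAct_inv_varpi_mul {G : Kn n} {σ : Perm (Fin n)} (hG : act σ G = G) :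
    piAct σ ((varpi n)⁻¹ * G) = (varpi n)⁻¹ * G := by
  rw [piAct, map_mul, map_inv₀, act_varpi_eq_coc_mul, hG, mul_inv, ← mul_assoc, ← mul_assoc,
    mul_inv_cancel₀ (coc_ne_zero σ), one_mul]

theorem symQ_of_symmetric {G : Kn n} (hG : ∀ σ : Perm (Fin n), act σ G = G) :
    symQ G = qFact n n * (varpi n)⁻¹ * G := by
  have hcoc : ∀ σ : Perm (Fin n), coc σ = act σ (varpi n) * (varpi n)⁻¹ := fun σ => by
    rw [act_varpi_eq_coc_mul, mul_inv_cancel_right₀ varpi_ne_zero]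
  simp_rw [symQ, piAct, hG, hcoc, ← sum_mul, sum_act_varpi]

theorem statement7 (n : ℕ) (G : Kn n) (hG : ∀ σ : Equiv.Perm (Fin n), act σ G = G) :
    ((n.factorial : Kn n))⁻¹ * symQ ((varpi n)⁻¹ * G) = (qFact n n)⁻¹ * symQ G := by
  calc ((n.factorial : Kn n))⁻¹ * symQ ((varpi n)⁻¹ * G)
      = ((n.factorial : Kn n))⁻¹ * (n.factorial * ((varpi n)⁻¹ * G)) := by
        rw [symQ, sum_congr rfl fun σ _ => piAct_inv_varpi_mul (hG σ), sum_const, card_univ,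
          Fintype.card_perm, Fintype.card_fin, nsmul_eq_mul]
    _ = (varpi n)⁻¹ * G := inv_mul_cancel_left₀ (Nat.cast_ne_zero.mpr n.factorial_ne_zero) _
    _ = (qFact n n)⁻¹ * symQ G := by
        rw [symQ_of_symmetric hG, mul_assoc, inv_mul_cancel_left₀ (qFact_ne_zero n)]
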